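/- Let V be a commutative unital quantale, F : Type u ⥤ Type u a functor, and L a lifting of F to V-Cat. Then L is topological: for every V-category (X,a) and all 𝔵,𝔶 ∈ F.obj X, L a 𝔵 𝔶 equals the infimum, taken over all V-categories (B,β) with B : Type u, all V-functors f : (X,a) → (B,β), and all V-functors h : (F.obj B, L β) → (V,hom), of hom (h (F.map f 𝔵)) (h (F.map f 𝔶)). -/

import Mathlib

universe u v w

open CategoryTheory

/-- `V` is a (commutative unital) quantale: the tensor distributes over suprema. -/
def QuantaleLaw (V : Type u) [CompleteLattice V] [CommMonoid V] : Prop :=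
  ∀ (u : V) (s : Set V), u * sSup s = ⨆ v ∈ s, u * v

/-- Internal hom of the quantale: `hom u w = ⨆ {v | u ⊗ v ≤ w}`. -/
def qhom {V : Type u} [CompleteLattice V] [CommMonoid V] (u w : V) : V :=
  sSup {v | u * v ≤ w}

/-- `a` is a `V`-category structure on `X`. -/
def IsVCat {V : Type u} [CompleteLattice V] [CommMonoid V] {X : Type v}
    (a : X → X → V) : Prop :=
  (∀ x, (1 : V) ≤ a x x) ∧ ∀ x y z, a x y * a y z ≤ a x z

/-- `f` is a `V`-functor from `(X,a)` to `(Y,b)`. -/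
def IsVFunctor {V : Type u} [CompleteLattice V] {X : Type v} {Y : Type w}
    (a : X → X → V) (b : Y → Y → V) (f : X → Y) : Prop :=
  ∀ x y, a x y ≤ b (f x) (f y)

/-- `f` is an initial `V`-functor from `(X,a)` to `(Y,b)`. -/
def IsInitialVFunctor {V : Type u} {X : Type v} {Y : Type w}
    (a : X → X → V) (b : Y → Y → V) (f : X → Y) : Prop :=
  ∀ x y, a x y = b (f x) (f y)

/-- The `V`-category structure of the power `V^κ`. -/
def powStr {V : Type u} [CompleteLattice V] [CommMonoid V] (κ : Type v)
    (p q : κ → V) : V :=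
  ⨅ i, qhom (p i) (q i)

/-- The graph of a function, as a `V`-relation: `k` on the graph, `⊥` elsewhere. -/
def fnGraph {V : Type u} [CompleteLattice V] [CommMonoid V] {X : Type v} {Y : Type w}
    (f : X → Y) : X → Y → V :=
  fun x y => ⨆ _ : f x = y, (1 : V)

/-- A lifting of a `Set`-functor `F` to `V`-Cat. -/
structure Lifting (V : Type u) [CompleteLattice V] [CommMonoid V]
    (F : Type u ⥤ Type u) where
  str : ∀ {X : Type u}, (X → X → V) → F.obj X → F.obj X → V
  isVCat : ∀ {X : Type u} (a : X → X → V), IsVCat a → IsVCat (str a)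
  map : ∀ {X Y : Type u} (a : X → X → V) (b : Y → Y → V) (f : X → Y),
    IsVCat a → IsVCat b → IsVFunctor a b f →
    IsVFunctor (str a) (str b) (F.map (TypeCat.ofHom f))

/-- A `κ`-ary `V`-valued predicate lifting for a `Set`-functor `F`. -/
structure PredLifting (V : Type u) [CompleteLattice V] [CommMonoid V]
    (F : Type u ⥤ Type u) (κ : Type u) where
  app : ∀ {X : Type u}, (X → κ → V) → F.obj X → V
  natural : ∀ {X Y : Type u} (f : X → Y) (p : Y → κ → V) (t : F.obj X),
    app (fun x => p (f x)) t = app p (F.map (TypeCat.ofHom f) t)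

/-- A predicate lifting is monotone if it preserves the pointwise order of predicates. -/
def PredLifting.Mono {V : Type u} [CompleteLattice V] [CommMonoid V]
    {F : Type u ⥤ Type u} {κ : Type u} (lam : PredLifting V F κ) : Prop :=
  ∀ (X : Type u) (p q : X → κ → V), (∀ x i, p x i ≤ q x i) →
    ∀ t, lam.app p t ≤ lam.app q t

/-- A predicate lifting is compatible with a lifting `L` if it lifts `V`-functorial
predicates to `V`-functorial predicates. -/
def Compatible {V : Type u} [CompleteLattice V] [CommMonoid V] {F : Type u ⥤ Type u}
    (L : Lifting V F) {κ : Type u} (lam : PredLifting V F κ) : Prop :=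
  ∀ (X : Type u) (a : X → X → V), IsVCat a → ∀ f : X → κ → V,
    IsVFunctor a (powStr κ) f → IsVFunctor (L.str a) qhom (lam.app f)

/-- The Kantorovich `V`-category structure on `F.obj X` induced by a family of
predicate liftings. -/
noncomputable def kantStr {V : Type u} [CompleteLattice V] [CommMonoid V]
    {F : Type u ⥤ Type u} {ι : Type v} {κ : ι → Type u}
    (Λ : ∀ l, PredLifting V F (κ l)) {X : Type u} (a : X → X → V)
    (t s : F.obj X) : V :=
  ⨅ l, ⨅ f : {f : X → κ l → V // IsVFunctor a (powStr (κ l)) f},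
    qhom ((Λ l).app f.1 t) ((Λ l).app f.1 s)

/-- A generalized predicate lifting for `(F, L)` with parameter `V`-category `(A, α)`. -/
structure GenPredLifting (V : Type u) [CompleteLattice V] [CommMonoid V]
    (F : Type u ⥤ Type u) (L : Lifting V F) (A : Type u) (α : A → A → V) where
  app : ∀ {Z : Type u}, (Z → Z → V) → (Z → A) → F.obj Z → V
  isVFunctor : ∀ {Z : Type u} (c : Z → Z → V), IsVCat c → ∀ f : Z → A,
    IsVFunctor c α f → IsVFunctor (L.str c) qhom (app c f)
  natural : ∀ {Z Z' : Type u} (c : Z → Z → V) (c' : Z' → Z' → V),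
    IsVCat c → IsVCat c' → ∀ (u : Z → Z'), IsVFunctor c c' u →
    ∀ (g : Z' → A), IsVFunctor c' α g →
    ∀ t : F.obj Z, app c (fun z => g (u z)) t = app c' g (F.map (TypeCat.ofHom u) t)

/-- A lax extension of a `Set`-functor `F` to `V`-Rel. -/
structure LaxExt (V : Type u) [CompleteLattice V] [CommMonoid V]
    (F : Type u ⥤ Type u) where
  ext : ∀ {X Y : Type u}, (X → Y → V) → F.obj X → F.obj Y → V
  mono : ∀ {X Y : Type u} (r r' : X → Y → V), (∀ x y, r x y ≤ r' x y) →
    ∀ t s, ext r t s ≤ ext r' t s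
  comp : ∀ {X Y Z : Type u} (r : X → Y → V) (s : Y → Z → V)
    (t : F.obj X) (w : F.obj Z),
    (⨆ u : F.obj Y, ext r t u * ext s u w) ≤
      ext (fun x z => ⨆ y, r x y * s y z) t w
  lax_map : ∀ {X Y : Type u} (f : X → Y) (t : F.obj X),
    (1 : V) ≤ ext (fnGraph f) t (F.map (TypeCat.ofHom f) t)
  lax_map_op : ∀ {X Y : Type u} (f : X → Y) (t : F.obj X),
    (1 : V) ≤ ext (fun y x => fnGraph f x y) (F.map (TypeCat.ofHom f) t) t

/- Every term of the infimum bounds `L a t s` from above, by functoriality of `F.map f` and of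
`h`. Conversely, the term for `(B, β) = (X, a)`, `f = id` and the representable `V`-functor
`h = L a t (-)` is `hom (L a t t) (L a t s)`, which is at most `L a t s` because `k ≤ L a t t`. -/

theorem QuantaleLaw.mul_le_mul_left {V : Type u} [CompleteLattice V] [CommMonoid V]
    (hV : QuantaleLaw V) {u u' : V} (h : u ≤ u') (w : V) : w * u ≤ w * u' :=
  calc w * u ≤ ⨆ v ∈ ({u, u'} : Set V), w * v := le_iSup₂_of_le u (Or.inl rfl) le_rfl
    _ = w * u' := by rw [← hV, sSup_pair, sup_eq_right.mpr h]

theorem QuantaleLaw.qhom_le_of_one_le {V : Type u} [CompleteLattice V] [CommMonoid V]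
    (hV : QuantaleLaw V) {u : V} (hu : 1 ≤ u) (w : V) : qhom u w ≤ w :=
  sSup_le fun v (hv : u * v ≤ w) =>
    calc v = 1 * v := (one_mul v).symm
      _ = v * 1 := mul_comm _ _
      _ ≤ v * u := hV.mul_le_mul_left hu v
      _ = u * v := mul_comm _ _
      _ ≤ w := hv

theorem IsVCat.isVFunctor_qhom_apply {V : Type u} [CompleteLattice V] [CommMonoid V]
    {X : Type v} {a : X → X → V} (ha : IsVCat a) (x : X) : IsVFunctor a qhom (a x) :=
  fun y z => le_sSup (ha.2 x y z)

theorem Lifting.str_le_qhom_map {V : Type u} [CompleteLattice V] [CommMonoid V]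
    {F : Type u ⥤ Type u} (L : Lifting V F) {X B : Type u} {a : X → X → V} {β : B → B → V}
    (ha : IsVCat a) (hβ : IsVCat β) {f : X → B} (hf : IsVFunctor a β f) {h : F.obj B → V}
    (hh : IsVFunctor (L.str β) qhom h) (t s : F.obj X) :
    L.str a t s ≤ qhom (h (F.map (TypeCat.ofHom f) t)) (h (F.map (TypeCat.ofHom f) s)) :=
  (L.map a β f ha hβ hf t s).trans (hh _ _)

theorem Lifting.qhom_str_le {V : Type u} [CompleteLattice V] [CommMonoid V]
    (hV : QuantaleLaw V) {F : Type u ⥤ Type u} (L : Lifting V F) {X : Type u}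
    {a : X → X → V} (ha : IsVCat a) (t s : F.obj X) :
    qhom (L.str a t t) (L.str a t s) ≤ L.str a t s :=
  hV.qhom_le_of_one_le ((L.isVCat a ha).1 t) _

/-- every lifting of a `Set`-functor to `V`-Cat is topological. -/
theorem stmt_10 {V : Type u} [CompleteLattice V] [CommMonoid V] (hV : QuantaleLaw V)
    {F : Type u ⥤ Type u} (L : Lifting V F)
    {X : Type u} (a : X → X → V) (ha : IsVCat a) (t s : F.obj X) :
    L.str a t s =
      ⨅ (B : Type u) (β : {β : B → B → V // IsVCat β})
        (f : {f : X → B // IsVFunctor a β.1 f})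
        (h : {h : F.obj B → V // IsVFunctor (L.str β.1) qhom h}),
        qhom (h.1 (F.map (TypeCat.ofHom f.1) t)) (h.1 (F.map (TypeCat.ofHom f.1) s)) := by
  refine le_antisymm (le_iInf fun B => le_iInf fun β => le_iInf fun f => le_iInf fun h =>
    L.str_le_qhom_map ha β.2 f.2 h.2 t s) ?_
  refine iInf_le_of_le X <| iInf_le_of_le ⟨a, ha⟩ <| iInf_le_of_le ⟨id, fun _ _ => le_rfl⟩ <|
    iInf_le_of_le ⟨L.str a t, (L.isVCat a ha).isVFunctor_qhom_apply t⟩ ?_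
  simp only [show TypeCat.ofHom id = 𝟙 X from rfl, Functor.map_id_apply]
  exact L.qhom_str_le hV ha t s
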